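/- Let φ, ψ ∈ C([t₀,t₀+η], B_r) where B_r is the closed ball of radius r around the identity in Diff^m(ℝ^d) (m ≥ 2) for the distance d_{m,∞}(φ,ψ) = max(‖φ−ψ‖_{m,∞}, ‖φ^{-1}−ψ^{-1}‖_{m,∞}). Then there is a constant C_r depending only on r such that for each t, ‖∇(Jφ(t))/Jφ(t) − ∇(Jψ(t))/Jψ(t)‖_∞ ≤ C_r ‖φ(t) − ψ(t)‖_{2,∞}. -/

import Mathlib

/-!
The logarithmic gradient is `∇(Jφ)/Jφ = (det Dφ)⁻¹ • (D det (Dφ) ∘ D²φ)`. On `B_r` the derivatives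
`Dφ` stay in the compact ball of radius `1 + r` of `End(ℝᵈ)`, on which `det` is bounded, Lipschitz,
and has a bounded Lipschitz derivative; moreover `‖D²φ‖ ≤ r`, and `(det Dφ(x))⁻¹ = det Dφ⁻¹(φ x)` is
bounded because `Dφ⁻¹` lies in the same ball. Splitting the difference as
`(a⁻¹ - b⁻¹) • L₁ + b⁻¹ • (L₁ - L₂)` and `L₁ - L₂ = (u₁ - u₂) ∘ B₁ + u₂ ∘ (B₁ - B₂)`, every term is
controlled by `‖Dφ - Dψ‖` or `‖D²φ - D²ψ‖`, both at most `‖φ - ψ‖_{2,∞}`.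
-/

noncomputable section

/-- Jacobian determinant `Jφ(x) = det Dφ(x)`. -/
def Jdet {d : ℕ} (φ : EuclideanSpace ℝ (Fin d) → EuclideanSpace ℝ (Fin d))
    (x : EuclideanSpace ℝ (Fin d)) : ℝ :=
  LinearMap.det (fderiv ℝ φ x :
    EuclideanSpace ℝ (Fin d) →ₗ[ℝ] EuclideanSpace ℝ (Fin d))

/-- The `C^k`-sup norm `‖f‖_{k,∞} = Σ_{j≤k} sup_x ‖D^j f(x)‖`. -/
def cSupNorm {d : ℕ} (k : ℕ)
    (f : EuclideanSpace ℝ (Fin d) → EuclideanSpace ℝ (Fin d)) : ℝ :=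
  ∑ j ∈ Finset.range (k + 1), ⨆ x, ‖iteratedFDeriv ℝ j f x‖

open Set Metric

local notation "𝔼" d => EuclideanSpace ℝ (Fin d)

namespace ContinuousLinearMap

variable {𝕜 E : Type*} [NontriviallyNormedField 𝕜] [CompleteSpace 𝕜] [NormedAddCommGroup E]
  [NormedSpace 𝕜 E] [FiniteDimensional 𝕜 E]

theorem contDiff_det {n : WithTop ℕ∞} : ContDiff 𝕜 n (fun A : E →L[𝕜] E => A.det) := by
  let b := Module.finBasis 𝕜 E
  have hdet : ∀ A : E →L[𝕜] E, A.det =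
      ∑ σ : Equiv.Perm (Fin (Module.finrank 𝕜 E)),
        (Equiv.Perm.sign σ : 𝕜) * ∏ i, b.equivFunL (A (b i)) (σ i) := by
    intro A
    rw [ContinuousLinearMap.det, ← LinearMap.det_toMatrix b, Matrix.det_apply]
    simp [LinearMap.toMatrix_apply, Units.smul_def, zsmul_eq_mul]
  simp only [funext hdet]
  refine ContDiff.sum fun σ _ => contDiff_const.mul (contDiff_prod fun i _ => ?_)
  exact (contDiff_apply 𝕜 𝕜 (σ i)).comp (b.equivFunL.contDiff.comp
    (ContinuousLinearMap.apply 𝕜 E (b i)).contDiff)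

end ContinuousLinearMap

section C2Bounds

variable {E F G H : Type*} [NormedAddCommGroup E] [NormedSpace ℝ E] [NormedAddCommGroup F]
  [NormedSpace ℝ F] [NormedAddCommGroup G] [NormedSpace ℝ G] [NormedAddCommGroup H]
  [NormedSpace ℝ H]

structure IsC2BoundOn (g : F → G) (K : Set F) (c : ℝ) : Prop where
  norm_le : ∀ A ∈ K, ‖g A‖ ≤ c
  norm_fderiv_le : ∀ A ∈ K, ‖fderiv ℝ g A‖ ≤ c
  norm_sub_le : ∀ A ∈ K, ∀ B ∈ K, ‖g A - g B‖ ≤ c * ‖A - B‖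
  norm_fderiv_sub_le : ∀ A ∈ K, ∀ B ∈ K, ‖fderiv ℝ g A - fderiv ℝ g B‖ ≤ c * ‖A - B‖

theorem ContDiff.exists_isC2BoundOn {g : F → G} (hg : ContDiff ℝ 2 g) {K : Set F}
    (hK : IsCompact K) (hKc : Convex ℝ K) : ∃ c > 0, IsC2BoundOn g K c := by
  have hg' : ContDiff ℝ 1 (fderiv ℝ g) := hg.fderiv_right (by norm_num)
  obtain ⟨c₀, hc₀⟩ := hK.exists_bound_of_continuousOn hg.continuous.continuousOn
  obtain ⟨c₁, hc₁⟩ := hK.exists_bound_of_continuousOn hg'.continuous.continuousOn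
  obtain ⟨c₂, hc₂⟩ := hg'.contDiffOn.exists_lipschitzOnWith one_ne_zero hKc hK
  set c := max c₀ (max c₁ (max (c₂ : ℝ) 1))
  have hc₁c : c₁ ≤ c := le_max_of_le_right (le_max_left _ _)
  refine ⟨c, by positivity, fun A hA => (hc₀ A hA).trans (le_max_left _ _),
    fun A hA => (hc₁ A hA).trans hc₁c, fun A hA B hB => ?_, fun A hA B hB => ?_⟩
  · exact hKc.norm_image_sub_le_of_norm_fderiv_le
      (fun y _ => (hg.differentiable (by norm_num)).differentiableAt)
      (fun y hy => (hc₁ y hy).trans hc₁c) hB hA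
  · exact (hc₂.norm_sub_le hA hB).trans (by gcongr; simp [c])

theorem norm_comp_sub_comp_le (u₁ u₂ : G →L[ℝ] H) (B₁ B₂ : E →L[ℝ] G) :
    ‖u₁ ∘L B₁ - u₂ ∘L B₂‖ ≤ ‖u₁ - u₂‖ * ‖B₁‖ + ‖u₂‖ * ‖B₁ - B₂‖ := by
  have hsplit : u₁ ∘L B₁ - u₂ ∘L B₂ = (u₁ - u₂) ∘L B₁ + u₂ ∘L (B₁ - B₂) := by
    rw [ContinuousLinearMap.sub_comp, ContinuousLinearMap.comp_sub]; abel
  rw [hsplit]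
  exact (norm_add_le _ _).trans
    (add_le_add (ContinuousLinearMap.opNorm_comp_le _ _) (ContinuousLinearMap.opNorm_comp_le _ _))

theorem IsC2BoundOn.norm_inv_smul_fderiv_comp_sub_le {g : G → ℝ} {K : Set G} {c r N : ℝ}
    (hg : IsC2BoundOn g K c) {A₁ A₂ : G} (hA₁ : A₁ ∈ K) (hA₂ : A₂ ∈ K) {B₁ B₂ : E →L[ℝ] G}
    (hB₁ : ‖B₁‖ ≤ r) {u₁ u₂ : ℝ} (hu₁ : u₁ * g A₁ = 1) (hu₂ : u₂ * g A₂ = 1)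
    (hu₁c : ‖u₁‖ ≤ c) (hu₂c : ‖u₂‖ ≤ c)
    (hA : ‖A₁ - A₂‖ ≤ N) (hB : ‖B₁ - B₂‖ ≤ N) :
    ‖(g A₁)⁻¹ • (fderiv ℝ g A₁ ∘L B₁) - (g A₂)⁻¹ • (fderiv ℝ g A₂ ∘L B₂)‖ ≤
      (c ^ 4 * r + c ^ 2 * r + c ^ 2) * N := by
  have h₁ : g A₁ ≠ 0 := right_ne_zero_of_mul_eq_one hu₁
  have h₂ : g A₂ ≠ 0 := right_ne_zero_of_mul_eq_one hu₂
  have hinv₁ : ‖(g A₁)⁻¹‖ ≤ c := by rwa [← eq_inv_of_mul_eq_one_left hu₁]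
  have hinv₂ : ‖(g A₂)⁻¹‖ ≤ c := by rwa [← eq_inv_of_mul_eq_one_left hu₂]
  set L₁ := fderiv ℝ g A₁ ∘L B₁
  set L₂ := fderiv ℝ g A₂ ∘L B₂
  have hc : 0 ≤ c := (norm_nonneg _).trans (hg.norm_fderiv_le A₁ hA₁)
  have hr : 0 ≤ r := (norm_nonneg _).trans hB₁
  have hN : 0 ≤ N := (norm_nonneg _).trans hA
  have hinv : ‖(g A₁)⁻¹ - (g A₂)⁻¹‖ ≤ c * (c * N) * c := by
    rw [inv_sub_inv' h₁ h₂, norm_mul, norm_mul, norm_sub_rev]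
    gcongr
    exact (hg.norm_sub_le A₁ hA₁ A₂ hA₂).trans (by gcongr)
  have hL₁ : ‖L₁‖ ≤ c * r :=
    (ContinuousLinearMap.opNorm_comp_le _ _).trans (by gcongr; exact hg.norm_fderiv_le A₁ hA₁)
  have hL : ‖L₁ - L₂‖ ≤ c * N * r + c * N := by
    refine (norm_comp_sub_comp_le _ _ _ _).trans (add_le_add ?_ ?_)
    · gcongr
      exact (hg.norm_fderiv_sub_le A₁ hA₁ A₂ hA₂).trans (by gcongr)
    · gcongr
      exact hg.norm_fderiv_le A₂ hA₂
  calc ‖(g A₁)⁻¹ • L₁ - (g A₂)⁻¹ • L₂‖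
      = ‖((g A₁)⁻¹ - (g A₂)⁻¹) • L₁ + (g A₂)⁻¹ • (L₁ - L₂)‖ := by
        rw [sub_smul, smul_sub]; abel_nf
    _ ≤ ‖(g A₁)⁻¹ - (g A₂)⁻¹‖ * ‖L₁‖ + ‖(g A₂)⁻¹‖ * ‖L₁ - L₂‖ := by
        refine (norm_add_le _ _).trans ?_
        rw [norm_smul, norm_smul]
    _ ≤ c * (c * N) * c * (c * r) + c * (c * N * r + c * N) := by gcongr
    _ = (c ^ 4 * r + c ^ 2 * r + c ^ 2) * N := by ring

end C2Bounds

section NearIdentity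

variable {𝕜 E F : Type*} [NontriviallyNormedField 𝕜] [NormedAddCommGroup E] [NormedSpace 𝕜 E]
  [NormedAddCommGroup F] [NormedSpace 𝕜 F]

theorem norm_fderiv_le_one_add {f : E → E} {x : E} {r : ℝ} (hf : DifferentiableAt 𝕜 f x)
    (h : ‖iteratedFDeriv 𝕜 1 (fun y => f y - y) x‖ ≤ r) : ‖fderiv 𝕜 f x‖ ≤ 1 + r := by
  rw [norm_iteratedFDeriv_one, fderiv_fun_sub hf differentiableAt_fun_id, fderiv_fun_id] at h
  calc ‖fderiv 𝕜 f x‖ = ‖ContinuousLinearMap.id 𝕜 E + (fderiv 𝕜 f x - .id 𝕜 E)‖ := by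
        rw [add_sub_cancel]
    _ ≤ 1 + r := (norm_add_le _ _).trans (add_le_add ContinuousLinearMap.norm_id_le h)

theorem norm_fderiv_fderiv_eq_norm_iteratedFDeriv_two (f : E → F) (x : E) :
    ‖fderiv 𝕜 (fderiv 𝕜 f) x‖ = ‖iteratedFDeriv 𝕜 2 f x‖ := by
  rw [← norm_iteratedFDeriv_one, norm_iteratedFDeriv_fderiv]

theorem norm_fderiv_fderiv_le {f : E → E} {x : E} {r : ℝ} (hf : Differentiable 𝕜 f)
    (h : ‖iteratedFDeriv 𝕜 2 (fun y => f y - y) x‖ ≤ r) : ‖fderiv 𝕜 (fderiv 𝕜 f) x‖ ≤ r := by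
  have hsub : fderiv 𝕜 (fun y => f y - y) = fun y => fderiv 𝕜 f y - .id 𝕜 E := by
    ext1 y
    rw [fderiv_fun_sub (hf y) differentiableAt_fun_id, fderiv_fun_id]
  rwa [← norm_fderiv_fderiv_eq_norm_iteratedFDeriv_two, hsub, fderiv_sub_const] at h

end NearIdentity

section Jacobian

variable {E : Type*} [NormedAddCommGroup E] [NormedSpace ℝ E]

theorem fderiv_det_fderiv [FiniteDimensional ℝ E] {f : E → E} (hf : ContDiff ℝ 2 f) (x : E) :
    fderiv ℝ (fun y => (fderiv ℝ f y).det) x =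
      fderiv ℝ (fun A : E →L[ℝ] E => A.det) (fderiv ℝ f x) ∘L fderiv ℝ (fderiv ℝ f) x := by
  have hf' : Differentiable ℝ (fderiv ℝ f) :=
    (hf.fderiv_right (m := 1) (by norm_num)).differentiable one_ne_zero
  exact fderiv_comp (g := fun A : E →L[ℝ] E => A.det) x
    ((ContinuousLinearMap.contDiff_det (n := 1)).differentiable one_ne_zero _) (hf' x)

theorem det_fderiv_mul_det_fderiv_of_leftInverse {f fi : E → E} {x : E}
    (hf : DifferentiableAt ℝ f x) (hfi : DifferentiableAt ℝ fi (f x))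
    (hleft : Function.LeftInverse fi f) :
    (fderiv ℝ fi (f x)).det * (fderiv ℝ f x).det = 1 := by
  have hcomp : fderiv ℝ fi (f x) ∘L fderiv ℝ f x = .id ℝ E := by
    rw [← fderiv_comp x hfi hf, hleft.comp_eq_id, fderiv_id]
  rw [ContinuousLinearMap.det, ContinuousLinearMap.det, ← LinearMap.det_comp,
    ← ContinuousLinearMap.toLinearMap_comp, hcomp, ContinuousLinearMap.coe_id, LinearMap.det_id]

end Jacobian

theorem norm_smul_gradient_sub_smul_gradient {E : Type*} [NormedAddCommGroup E]
    [InnerProductSpace ℝ E] [CompleteSpace E] (a b : ℝ) (f g : E → ℝ) (x : E) :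
    ‖a • gradient f x - b • gradient g x‖ = ‖a • fderiv ℝ f x - b • fderiv ℝ g x‖ := by
  simp only [gradient, ← map_smul, ← map_sub, LinearIsometryEquiv.norm_map]

section SupNorm

variable {d : ℕ}

-- Boundedness is needed: `⨆` of an unbounded family of reals is `0`.
theorem norm_iteratedFDeriv_le_cSupNorm {f : (𝔼 d) → 𝔼 d} {j k : ℕ} (hjk : j ≤ k)
    (hf : BddAbove (range fun x => ‖iteratedFDeriv ℝ j f x‖)) (x : 𝔼 d) :
    ‖iteratedFDeriv ℝ j f x‖ ≤ cSupNorm k f :=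
  (le_ciSup hf x).trans <| Finset.single_le_sum (f := fun i => ⨆ x, ‖iteratedFDeriv ℝ i f x‖)
    (fun _ _ => Real.iSup_nonneg fun _ => norm_nonneg _) (Finset.mem_range.mpr (by omega))

theorem bddAbove_norm_iteratedFDeriv_sub {f g : (𝔼 d) → 𝔼 d} {j : ℕ} {r : ℝ}
    (hf : ContDiff ℝ j f) (hg : ContDiff ℝ j g)
    (hfr : ∀ x, ‖iteratedFDeriv ℝ j (fun y => f y - y) x‖ ≤ r)
    (hgr : ∀ x, ‖iteratedFDeriv ℝ j (fun y => g y - y) x‖ ≤ r) :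
    BddAbove (range fun x => ‖iteratedFDeriv ℝ j (fun y => f y - g y) x‖) := by
  refine ⟨r + r, forall_mem_range.mpr fun x => ?_⟩
  have hfg : (fun y => f y - g y) = (fun y => f y - y) - (fun y => g y - y) := by
    ext1 y; simp
  rw [hfg, iteratedFDeriv_sub_apply (hf.sub contDiff_fun_id).contDiffAt
    (hg.sub contDiff_fun_id).contDiffAt]
  exact (norm_sub_le _ _).trans (add_le_add (hfr x) (hgr x))

theorem norm_fderiv_sub_fderiv_le_cSupNorm {φ ψ : (𝔼 d) → 𝔼 d} {k : ℕ} (hk : 1 ≤ k)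
    (hφ : Differentiable ℝ φ) (hψ : Differentiable ℝ ψ)
    (hb : BddAbove (range fun x => ‖iteratedFDeriv ℝ 1 (fun y => φ y - ψ y) x‖)) (x : 𝔼 d) :
    ‖fderiv ℝ φ x - fderiv ℝ ψ x‖ ≤ cSupNorm k (fun y => φ y - ψ y) := by
  rw [← fderiv_fun_sub (hφ x) (hψ x), ← norm_iteratedFDeriv_one]
  exact norm_iteratedFDeriv_le_cSupNorm hk hb x

theorem norm_fderiv_fderiv_sub_fderiv_fderiv_le_cSupNorm {φ ψ : (𝔼 d) → 𝔼 d} {k : ℕ} (hk : 2 ≤ k)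
    (hφ : ContDiff ℝ 2 φ) (hψ : ContDiff ℝ 2 ψ)
    (hb : BddAbove (range fun x => ‖iteratedFDeriv ℝ 2 (fun y => φ y - ψ y) x‖)) (x : 𝔼 d) :
    ‖fderiv ℝ (fderiv ℝ φ) x - fderiv ℝ (fderiv ℝ ψ) x‖ ≤ cSupNorm k (fun y => φ y - ψ y) := by
  have hφ' := (hφ.fderiv_right (m := 1) (by norm_num)).differentiable one_ne_zero
  have hψ' := (hψ.fderiv_right (m := 1) (by norm_num)).differentiable one_ne_zero
  have hsub : fderiv ℝ (fun y => φ y - ψ y) = fun y => fderiv ℝ φ y - fderiv ℝ ψ y := by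
    ext1 y
    exact fderiv_fun_sub (hφ.differentiable two_ne_zero y) (hψ.differentiable two_ne_zero y)
  rw [← fderiv_fun_sub (hφ' x) (hψ' x), ← hsub, norm_fderiv_fderiv_eq_norm_iteratedFDeriv_two]
  exact norm_iteratedFDeriv_le_cSupNorm hk hb x

end SupNorm

theorem fderiv_Jdet {d : ℕ} {f : (𝔼 d) → 𝔼 d}
    (hf : ContDiff ℝ 2 f) (x : EuclideanSpace ℝ (Fin d)) :
    fderiv ℝ (Jdet f) x = fderiv ℝ (fun A : (𝔼 d) →L[ℝ] 𝔼 d => A.det)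
      (fderiv ℝ f x) ∘L fderiv ℝ (fderiv ℝ f) x :=
  fderiv_det_fderiv hf x

/-- for `C^m` diffeomorphisms `φ, ψ` (with `C^m` inverses) in the
ball `B_r` around the identity (for `d_{m,∞}`), there is a constant `C_r`
depending only on `r` (and `m`, `d`) with
`‖∇(Jφ)/Jφ − ∇(Jψ)/Jψ‖_∞ ≤ C_r ‖φ − ψ‖_{2,∞}`. -/
theorem stmt12 (d m : ℕ) (hm : 2 ≤ m) (r : ℝ) (hr : 0 < r) :
    ∃ C : ℝ, 0 < C ∧
      ∀ φ ψ φi ψi : EuclideanSpace ℝ (Fin d) → EuclideanSpace ℝ (Fin d),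
        ContDiff ℝ m φ → ContDiff ℝ m ψ →
        ContDiff ℝ m φi → ContDiff ℝ m ψi →
        (∀ x, φi (φ x) = x) → (∀ x, φ (φi x) = x) →
        (∀ x, ψi (ψ x) = x) → (∀ x, ψ (ψi x) = x) →
        (∀ k ≤ m, ∀ x, ‖iteratedFDeriv ℝ k (fun y => φ y - y) x‖ ≤ r) →
        (∀ k ≤ m, ∀ x, ‖iteratedFDeriv ℝ k (fun y => ψ y - y) x‖ ≤ r) →
        (∀ k ≤ m, ∀ x, ‖iteratedFDeriv ℝ k (fun y => φi y - y) x‖ ≤ r) →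
        (∀ k ≤ m, ∀ x, ‖iteratedFDeriv ℝ k (fun y => ψi y - y) x‖ ≤ r) →
        ∀ x, ‖(Jdet φ x)⁻¹ • gradient (Jdet φ) x
                - (Jdet ψ x)⁻¹ • gradient (Jdet ψ) x‖ ≤
          C * cSupNorm 2 (fun z => φ z - ψ z) := by
  obtain ⟨c, hc, hdet⟩ := (ContinuousLinearMap.contDiff_det (n := 2)).exists_isC2BoundOn
    (isCompact_closedBall (0 : (𝔼 d) →L[ℝ] 𝔼 d) (1 + r)) (convex_closedBall _ _)
  refine ⟨c ^ 4 * r + c ^ 2 * r + c ^ 2, by positivity, ?_⟩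
  intro φ ψ φi ψi hφ hψ hφi hψi hφiφ _ hψiψ _ hbφ hbψ hbφi hbψi x
  have hC : ∀ {j : ℕ} {f : (𝔼 d) → 𝔼 d}, j ≤ m → ContDiff ℝ m f →
      ContDiff ℝ j f := fun hj hf => hf.of_le (by exact_mod_cast hj)
  have hdiff : ∀ {f : (𝔼 d) → 𝔼 d}, ContDiff ℝ m f → Differentiable ℝ f :=
    fun hf => (hC (j := 1) (by omega) hf).differentiable one_ne_zero
  have hmem : ∀ {f : (𝔼 d) → 𝔼 d}, ContDiff ℝ m f →
      (∀ k ≤ m, ∀ x, ‖iteratedFDeriv ℝ k (fun y => f y - y) x‖ ≤ r) →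
      ∀ y, fderiv ℝ f y ∈ closedBall 0 (1 + r) := fun hf hb y =>
    mem_closedBall_zero_iff.mpr (norm_fderiv_le_one_add (hdiff hf y) (hb 1 (by omega) y))
  have hbdd : ∀ j ≤ m, BddAbove (range fun x => ‖iteratedFDeriv ℝ j (fun y => φ y - ψ y) x‖) :=
    fun j hj => bddAbove_norm_iteratedFDeriv_sub (hC hj hφ) (hC hj hψ) (hbφ j hj) (hbψ j hj)
  rw [norm_smul_gradient_sub_smul_gradient, fderiv_Jdet (hC hm hφ), fderiv_Jdet (hC hm hψ)]
  exact hdet.norm_inv_smul_fderiv_comp_sub_le (hmem hφ hbφ x) (hmem hψ hbψ x)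
    (norm_fderiv_fderiv_le (hdiff hφ) (hbφ 2 hm x))
    (det_fderiv_mul_det_fderiv_of_leftInverse (hdiff hφ x) (hdiff hφi _) hφiφ)
    (det_fderiv_mul_det_fderiv_of_leftInverse (hdiff hψ x) (hdiff hψi _) hψiψ)
    (hdet.norm_le _ (hmem hφi hbφi _)) (hdet.norm_le _ (hmem hψi hbψi _))
    (norm_fderiv_sub_fderiv_le_cSupNorm (by norm_num) (hdiff hφ) (hdiff hψ) (hbdd 1 (by omega)) x)
    (norm_fderiv_fderiv_sub_fderiv_fderiv_le_cSupNorm le_rfl (hC hm hφ) (hC hm hψ) (hbdd 2 hm) x)
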